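/- Let X = (y, U, H) ∈ F₀ᴹ, i.e., X ∈ F₀ (so y_ξ + H_ξ = 1, y_ξ, H_ξ ≥ 0, y_ξ H_ξ = y_ξ²U² + U_ξ² a.e., H(-∞)=0) with ‖H‖_{L^∞} ≤ M. Then ‖U‖_{L^∞}² ≤ M. -/

import Mathlib

/-! The relation `y_ξ H_ξ = y_ξ² U² + U_ξ²` gives `(U²)_ξ = 2 U U_ξ ≤ H_ξ` a.e., so `H - U²` is
nondecreasing. Since `U ∈ L²`, `U²` is small somewhere arbitrarily far to the left, where also
`H ≈ 0`; comparing with such a point gives `U(ξ)² ≤ H(ξ) ≤ M`. -/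

open MeasureTheory

/-- `(y,U,H) ∈ F₀` (see the paper): Lagrangian coordinates in `E = V × H¹ × V`
with `y_ξ, H_ξ ≥ 0`, `y_ξ + H_ξ = 1` a.e., the compatibility relation
`y_ξ H_ξ = y_ξ² U² + U_ξ²` a.e., and `H(-∞) = 0`. -/
def InF0 (y U H : ℝ → ℝ) : Prop :=
  (∃ K : NNReal, LipschitzWith K y) ∧ (∃ K : NNReal, LipschitzWith K U) ∧
  (∃ K : NNReal, LipschitzWith K H) ∧
  (∃ C : ℝ, ∀ x, |y x - x| ≤ C) ∧ (∃ C : ℝ, ∀ x, |H x| ≤ C) ∧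
  MemLp (fun x => deriv y x - 1) 2 (volume : Measure ℝ) ∧
  MemLp (deriv H) 2 (volume : Measure ℝ) ∧
  MemLp U 2 (volume : Measure ℝ) ∧
  MemLp (deriv U) 2 (volume : Measure ℝ) ∧
  (∀ᵐ ξ ∂(volume : Measure ℝ),
    0 ≤ deriv y ξ ∧ 0 ≤ deriv H ξ ∧ deriv y ξ + deriv H ξ = 1 ∧
    deriv y ξ * deriv H ξ = (deriv y ξ) ^ 2 * (U ξ) ^ 2 + (deriv U ξ) ^ 2) ∧
  Filter.Tendsto H Filter.atBot (nhds 0)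

open Filter

lemma two_mul_mul_le_of_mul_eq_sq_add_sq {p q u v : ℝ} (hp : 0 ≤ p)
    (hq : 0 ≤ q) (h : p * q = p ^ 2 * u ^ 2 + v ^ 2) : 2 * u * v ≤ q := by
  rcases hp.eq_or_lt with rfl | hp
  · have hv : v = 0 := by nlinarith [sq_nonneg v]
    simpa [hv] using hq
  · -- `p (q - 2uv) = (pu - v)²`
    have : 0 ≤ p * (q - 2 * u * v) := by nlinarith [sq_nonneg (p * u - v)]
    nlinarith [(mul_nonneg_iff_of_pos_left hp).mp this]

lemma monotone_of_ae_deriv_nonneg {f : ℝ → ℝ}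
    (hf : ∀ a b, AbsolutelyContinuousOnInterval f a b) (hf' : ∀ᵐ x, 0 ≤ deriv f x) :
    Monotone f := fun a b hab => by
  have := intervalIntegral.integral_nonneg_of_ae hab hf'
  rw [(hf a b).integral_deriv_eq_sub] at this
  linarith

lemma LipschitzWith.absolutelyContinuousOnInterval {X : Type*} [PseudoMetricSpace X]
    {f : ℝ → X} {K : NNReal}
    (hf : LipschitzWith K f) (a b : ℝ) : AbsolutelyContinuousOnInterval f a b :=
  hf.lipschitzOnWith.absolutelyContinuousOnInterval

lemma frequently_atBot_norm_lt_of_integrable {E : Type*} [NormedAddCommGroup E]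
    {f : ℝ → E} (hf : Integrable f) {ε : ℝ} (hε : 0 < ε) : ∃ᶠ x in atBot, ‖f x‖ < ε := by
  intro hbig
  obtain ⟨b, hb⟩ := eventually_atBot.mp hbig
  have hconst : Integrable (fun _ => ε) (volume.restrict (Set.Iic b)) := by
    refine (hf.norm.restrict (s := Set.Iic b)).mono' aestronglyMeasurable_const ?_
    filter_upwards [ae_restrict_mem measurableSet_Iic] with x hx
    simpa [abs_of_pos hε] using hb x hx
  simp [integrable_const_iff, hε.ne', isFiniteMeasure_restrict] at hconst

lemma monotone_sub_sq_of_inF0 {y U H : ℝ → ℝ} (h : InF0 y U H) :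
    Monotone fun ξ => H ξ - U ξ ^ 2 := by
  obtain ⟨-, ⟨KU, hU⟩, ⟨KH, hH⟩, -, -, -, -, -, -, hrel, -⟩ := h
  have hsq : (fun ξ => H ξ - U ξ ^ 2) = H - U * U := by ext; simp [sq]
  rw [hsq]
  refine monotone_of_ae_deriv_nonneg (fun a b => (hH.absolutelyContinuousOnInterval a b).sub
    ((hU.absolutelyContinuousOnInterval a b).mul (hU.absolutelyContinuousOnInterval a b))) ?_
  filter_upwards [hrel, hU.ae_differentiableAt, hH.ae_differentiableAt] with x hx hUx hHx
  obtain ⟨hy, hH', -, hxrel⟩ := hx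
  rw [(hHx.hasDerivAt.sub (hUx.hasDerivAt.mul hUx.hasDerivAt)).deriv]
  linarith [two_mul_mul_le_of_mul_eq_sq_add_sq hy hH' hxrel]

/-- For `X = (y,U,H) ∈ F₀ᴹ`, i.e. `X ∈ F₀` with `‖H‖_{L^∞} ≤ M`, one has
`‖U‖_{L^∞}² ≤ M`. -/
theorem stmt8 (M : ℝ) (y U H : ℝ → ℝ) (h : InF0 y U H)
    (hM : ∀ ξ, |H ξ| ≤ M) :
    ∀ ξ, (U ξ) ^ 2 ≤ M := by
  intro ξ
  have hmono := monotone_sub_sq_of_inF0 h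
  obtain ⟨-, -, -, -, -, -, -, hUL2, -, -, hH0⟩ := h
  refine le_of_forall_pos_lt_add fun ε hε => ?_
  have hleft : ∀ᶠ a in atBot, a ≤ ξ ∧ -(ε / 2) < H a :=
    (eventually_le_atBot ξ).and (hH0.eventually (lt_mem_nhds (by linarith)))
  obtain ⟨a, ⟨haξ, hHa⟩, hUa⟩ := (hleft.and_frequently
    (frequently_atBot_norm_lt_of_integrable hUL2.integrable_sq (half_pos hε))).exists
  rw [Real.norm_of_nonneg (sq_nonneg _)] at hUa
  linarith [hmono haξ, (abs_le.mp (hM ξ)).2]
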